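/- Let n ≥ 3 be an integer, μ > −1 and C > 0, and let ψ ∈ 𝒜 satisfy ψ'(r)/ψ(r) ∼ C r^μ as r → +∞. Set κ := (C(1+μ)^μ)^{1/(1+μ)}, equivalently C = κ^{1+μ}/(1+μ)^μ. Then ∫₁^∞ ψ(t)^{−(n−1)} dt < ∞, and the change of variables s = s(r) defined by 1/((n−2)s^{n−2}) = ∫_r^∞ ψ(t)^{−(n−1)} dt, with inverse r = r(s), and the weight ρ(s) := ψ(r(s))^{2(n−1)}/s^{2(n−1)} satisfy: ρ(s) ∼ ((n−2)/(n−1))^{2/(1+μ)} / ( κ² s² (log s)^{2μ/(1+μ)} ) as s → +∞, and r(s) ∼ c₁ (log s)^{1/(1+μ)} as s → +∞, where c₁ := ( ((1+μ)/C) · (n−2)/(n−1) )^{1/(1+μ)}. -/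

import Mathlib

/-- The class `𝒜` of model functions: `ψ ∈ C^∞((0,∞)) ∩ C¹([0,∞))` with `ψ(0) = 0`,
`ψ'(0) = 1` (one-sided derivative) and `ψ > 0` on `(0,∞)`. -/
def classA (ψ : ℝ → ℝ) : Prop :=
  ContDiffOn ℝ (⊤ : ℕ∞) ψ (Set.Ioi 0) ∧ ContDiffOn ℝ 1 ψ (Set.Ici 0) ∧
  ψ 0 = 0 ∧ derivWithin ψ (Set.Ici 0) 0 = 1 ∧ ∀ r > (0 : ℝ), 0 < ψ r

/-- The change of variables `s = s(r)` determined by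
`1/((n-2) s^{n-2}) = ∫_r^∞ ψ(t)^{-(n-1)} dt`. -/
noncomputable def Svar (n : ℕ) (ψ : ℝ → ℝ) (r : ℝ) : ℝ :=
  (((n : ℝ) - 2) * ∫ t in Set.Ioi r, 1 / ψ t ^ (n - 1)) ^ (-(1 / ((n : ℝ) - 2)))

section Helpers
open Filter Set MeasureTheory

lemma deriv_cmp {F G F' G' : ℝ → ℝ} {R : ℝ}
    (hF : ∀ r ∈ Set.Ici R, HasDerivAt F (F' r) r)
    (hG : ∀ r ∈ Set.Ici R, HasDerivAt G (G' r) r)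
    (hle : ∀ r ∈ Set.Ici R, F' r ≤ G' r) :
    ∀ r ∈ Set.Ici R, F r - F R ≤ G r - G R := by
  intro r hr
  have hdiff : ∀ x ∈ Set.Ici R, HasDerivAt (fun y => G y - F y) (G' x - F' x) x :=
    fun x hx => (hG x hx).sub (hF x hx)
  have hm : MonotoneOn (fun y => G y - F y) (Set.Ici R) := by
    apply monotoneOn_of_deriv_nonneg (convex_Ici R)
    · exact fun x hx => (hdiff x hx).differentiableAt.continuousAt.continuousWithinAt
    · intro x hx
      rw [interior_Ici] at hx
      exact (hdiff x (Set.mem_Ici.2 (Set.mem_Ioi.1 hx).le)).differentiableAt.differentiableWithinAt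
    · intro x hx
      rw [interior_Ici] at hx
      rw [(hdiff x (Set.mem_Ici.2 (Set.mem_Ioi.1 hx).le)).deriv]
      linarith [hle x (Set.mem_Ici.2 (Set.mem_Ioi.1 hx).le)]
  have := hm (Set.self_mem_Ici) hr hr
  dsimp only at this
  linarith

lemma lhopital_top {F G F' G' : ℝ → ℝ}
    (hF : ∀ᶠ r in atTop, HasDerivAt F (F' r) r)
    (hG : ∀ᶠ r in atTop, HasDerivAt G (G' r) r)
    (hG' : ∀ᶠ r in atTop, 0 < G' r)
    (hGtop : Tendsto G atTop atTop)
    (hdiv : Tendsto (fun r => F' r / G' r) atTop (nhds 1)) :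
    Tendsto (fun r => F r / G r) atTop (nhds 1) := by
  rw [Metric.tendsto_nhds] at hdiv ⊢
  simp only [Real.dist_eq] at hdiv ⊢
  intro ε hε
  have hε4 : 0 < ε / 4 := by linarith
  obtain ⟨R, hR⟩ := eventually_atTop.1 (hF.and (hG.and (hG'.and (hdiv (ε/4) hε4))))
  have hFd : ∀ r ∈ Set.Ici R, HasDerivAt F (F' r) r := fun r hr => (hR r hr).1
  have hGd : ∀ r ∈ Set.Ici R, HasDerivAt G (G' r) r := fun r hr => (hR r hr).2.1
  have hG'p : ∀ r ∈ Set.Ici R, 0 < G' r := fun r hr => (hR r hr).2.2.1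
  have hcmp : ∀ r ∈ Set.Ici R, |F' r - G' r| ≤ (ε/4) * G' r := by
    intro r hr
    have h1 := (hR r hr).2.2.2
    have h2 := hG'p r hr
    have heq : F' r / G' r - 1 = (F' r - G' r) / G' r := by field_simp
    rw [heq, abs_div, abs_of_pos h2, div_lt_iff₀ h2] at h1
    linarith
  -- upper bound
  have hup : ∀ r ∈ Set.Ici R, F r - F R ≤ (1 + ε/4) * G r - (1 + ε/4) * G R := by
    have := deriv_cmp hFd (fun r hr => (hGd r hr).const_mul (1 + ε/4))
      (fun r hr => by nlinarith [abs_le.1 (hcmp r hr), hG'p r hr]) 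
    intro r hr; simpa using this r hr
  have hlo : ∀ r ∈ Set.Ici R, (1 - ε/4) * G r - (1 - ε/4) * G R ≤ F r - F R := by
    have := deriv_cmp (fun r hr => (hGd r hr).const_mul (1 - ε/4)) hFd
      (fun r hr => by nlinarith [abs_le.1 (hcmp r hr), hG'p r hr])
    intro r hr; simpa using this r hr
  have hGmono : ∀ r ∈ Set.Ici R, G R ≤ G r := by
    have := deriv_cmp (F := fun _ => (0:ℝ)) (F' := fun _ => (0:ℝ)) 
      (fun r _ => hasDerivAt_const r 0) hGd (fun r hr => (hG'p r hr).le)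
    intro r hr; have := this r hr; simpa using by linarith [this]
  set K : ℝ := (ε/4) * |G R| + |F R - G R| with hK
  have hK0 : 0 ≤ K := by positivity
  have hGbig : ∀ᶠ r in atTop, K * (2/ε) + 1 ≤ G r := hGtop.eventually (eventually_ge_atTop _)
  filter_upwards [hGbig, eventually_ge_atTop R] with r hGr hrR
  have hKe : 0 ≤ K * (2/ε) := by positivity
  have hGrpos : 0 < G r := by linarith
  have h1 := hup r hrR
  have h2 := hlo r hrR
  have h3 := hGmono r hrR
  have key : |F r - G r| ≤ (ε/4) * G r + K := by
    have hbound : |(F r - F R) - (G r - G R)| ≤ (ε/4) * (G r - G R) := by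
      rw [abs_le]; constructor <;> nlinarith
    have : F r - G r = ((F r - F R) - (G r - G R)) + (F R - G R) := by ring
    rw [this]
    calc |((F r - F R) - (G r - G R)) + (F R - G R)| 
        ≤ |(F r - F R) - (G r - G R)| + |F R - G R| := abs_add_le _ _
      _ ≤ (ε/4) * (G r - G R) + |F R - G R| := by linarith
      _ ≤ (ε/4) * G r + K := by
          have : -|G R| ≤ G R := neg_abs_le _
          rw [hK]; nlinarith
  have : F r / G r - 1 = (F r - G r) / G r := by field_simp
  rw [this, abs_div, abs_of_pos hGrpos, div_lt_iff₀ hGrpos]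
  have hKGr : K ≤ (ε/2) * (G r - 1) + 0 := by
    have : K * (2/ε) ≤ G r - 1 := by linarith
    calc K = (ε/2) * (K * (2/ε)) := by field_simp
      _ ≤ (ε/2) * (G r - 1) + 0 := by nlinarith
  nlinarith



section AA
variable {n : ℕ} {μ C : ℝ} {ψ : ℝ → ℝ}

lemma psi_hasDeriv (hψA : classA ψ) {r : ℝ} (hr : 0 < r) : HasDerivAt ψ (deriv ψ r) r := by
  have h1 : DifferentiableOn ℝ ψ (Set.Ioi 0) := hψA.1.differentiableOn (by simp)
  exact (h1.differentiableAt (Ioi_mem_nhds hr)).hasDerivAt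

lemma psi_contOn (hψA : classA ψ) : ContinuousOn ψ (Set.Ioi 0) := hψA.1.continuousOn

/-- Asymptotics of `log ψ`. -/
lemma log_psi_asymp (hμ : -1 < μ) (hC : 0 < C) (hψA : classA ψ)
    (hψratio : Tendsto (fun r => (deriv ψ r / ψ r) / (C * r ^ μ)) atTop (nhds 1)) :
    Tendsto (fun r => Real.log (ψ r) / (C * r ^ (1 + μ) / (1 + μ))) atTop (nhds 1) := by
  have h1μ : (0:ℝ) < 1 + μ := by linarith
  apply lhopital_top (F' := fun r => deriv ψ r / ψ r) (G' := fun r => C * r ^ μ)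
  · filter_upwards [eventually_gt_atTop (0:ℝ)] with r hr
    exact (psi_hasDeriv hψA hr).log (ne_of_gt (hψA.2.2.2.2 r hr))
  · filter_upwards [eventually_gt_atTop (0:ℝ)] with r hr
    have h := (Real.hasDerivAt_rpow_const (x := r) (p := 1 + μ) (Or.inl (ne_of_gt hr)))
    have h2 := (h.const_mul C).div_const (1 + μ)
    exact h2.congr_deriv (by rw [show 1 + μ - 1 = μ by ring]; field_simp)
  · filter_upwards [eventually_gt_atTop (0:ℝ)] with r hr
    positivity
  · apply Tendsto.atTop_div_const h1μ
    exact (tendsto_rpow_atTop h1μ).const_mul_atTop hC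
  · exact hψratio

lemma psi_log_lb (hμ : -1 < μ) (hC : 0 < C) (hψA : classA ψ)
    (hψratio : Tendsto (fun r => (deriv ψ r / ψ r) / (C * r ^ μ)) atTop (nhds 1)) :
    ∀ᶠ r in atTop, (C / (2 * (1 + μ))) * r ^ (1 + μ) ≤ Real.log (ψ r) := by
  have h1μ : (0:ℝ) < 1 + μ := by linarith
  have h := (log_psi_asymp hμ hC hψA hψratio).eventually
    (eventually_ge_nhds (show (1:ℝ)/2 < 1 by norm_num))
  filter_upwards [h, eventually_gt_atTop (0:ℝ)] with r hr hr0
  have hpow : (0:ℝ) < r ^ (1 + μ) := Real.rpow_pos_of_pos hr0 _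
  have hG : (0:ℝ) < C * r ^ (1 + μ) / (1 + μ) := by positivity
  have h3 : (1/2) * (C * r ^ (1+μ) / (1+μ)) ≤ Real.log (ψ r) := by
    have := (le_div_iff₀ hG).mp hr
    linarith
  calc (C / (2 * (1 + μ))) * r ^ (1 + μ) = (1/2) * (C * r ^ (1+μ) / (1+μ)) := by
        field_simp
    _ ≤ Real.log (ψ r) := h3

/-- Eventual bound `1/ψ^{n-1} ≤ r^{-2}`. -/
lemma g_bound (hn : 3 ≤ n) (hμ : -1 < μ) (hC : 0 < C) (hψA : classA ψ)
    (hψratio : Tendsto (fun r => (deriv ψ r / ψ r) / (C * r ^ μ)) atTop (nhds 1)) :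
    ∀ᶠ r in atTop, 1 / ψ r ^ (n - 1) ≤ r ^ (-2 : ℝ) := by
  have h1μ : (0:ℝ) < 1 + μ := by linarith
  have hb : (0:ℝ) < C / (2 * (1 + μ)) := by positivity
  have hlog := Asymptotics.IsLittleO.def (isLittleO_log_rpow_atTop h1μ)
      (show (0:ℝ) < (C / (2 * (1+μ)))/2 by positivity)
  filter_upwards [psi_log_lb hμ hC hψA hψratio, hlog, eventually_ge_atTop (1:ℝ)] with r hlb hsm hr1
  have hr0 : (0:ℝ) < r := by linarith
  have hψpos : 0 < ψ r := hψA.2.2.2.2 r hr0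
  have hpow : (0:ℝ) < r ^ (1 + μ) := Real.rpow_pos_of_pos hr0 _
  rw [Real.norm_eq_abs, Real.norm_eq_abs, abs_of_nonneg (Real.log_nonneg hr1),
    abs_of_pos hpow] at hsm
  have h2log : 2 * Real.log r ≤ Real.log (ψ r) := by
    calc 2 * Real.log r ≤ 2 * ((C / (2*(1+μ)))/2 * r ^ (1+μ)) := by linarith
      _ = (C / (2*(1+μ))) * r ^ (1+μ) := by ring
      _ ≤ Real.log (ψ r) := hlb
  have hψr2 : r ^ (2:ℕ) ≤ ψ r := by
    have hl : Real.log (r ^ (2:ℕ)) ≤ Real.log (ψ r) := by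
      rw [Real.log_pow]; push_cast; linarith
    exact (Real.log_le_log_iff (by positivity) hψpos).mp hl
  have hψ1 : 1 ≤ ψ r := le_trans (by nlinarith [sq_nonneg (r-1)]) hψr2
  have hψn : r ^ (2:ℕ) ≤ ψ r ^ (n - 1) := le_trans hψr2 (le_self_pow₀ hψ1 (by omega))
  rw [Real.rpow_neg hr0.le, show ((2:ℝ)) = ((2:ℕ):ℝ) by norm_num, Real.rpow_natCast]
  rw [one_div]
  apply inv_anti₀ (by positivity) hψn

end AA

section BB
variable {n : ℕ} {μ C : ℝ} {ψ : ℝ → ℝ}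

noncomputable def Ifun (n : ℕ) (ψ : ℝ → ℝ) (r : ℝ) : ℝ := ∫ t in Set.Ioi r, 1 / ψ t ^ (n - 1)

lemma g_contOn (hψA : classA ψ) : ContinuousOn (fun t => 1 / ψ t ^ (n-1)) (Set.Ioi 0) := by
  apply ContinuousOn.div continuousOn_const ((psi_contOn hψA).pow _)
  intro t ht
  exact pow_ne_zero _ (ne_of_gt (hψA.2.2.2.2 t ht))

lemma g_pos (hψA : classA ψ) {t : ℝ} (ht : 0 < t) : 0 < 1 / ψ t ^ (n-1) := by
  have := hψA.2.2.2.2 t ht; positivity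

lemma g_integrableOn (hn : 3 ≤ n) (hμ : -1 < μ) (hC : 0 < C) (hψA : classA ψ)
    (hψratio : Tendsto (fun r => (deriv ψ r / ψ r) / (C * r ^ μ)) atTop (nhds 1)) :
    ∀ a : ℝ, 0 < a → IntegrableOn (fun t => 1 / ψ t ^ (n-1)) (Set.Ioi a) := by
  intro a ha
  obtain ⟨R, hR⟩ := eventually_atTop.1 (g_bound hn hμ hC hψA hψratio)
  set R' := max R (max a 1) with hR'
  have haR' : a ≤ R' := le_max_of_le_right (le_max_left _ _)
  have hR'1 : (1:ℝ) ≤ R' := le_max_of_le_right (le_max_right _ _)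
  have hR'0 : (0:ℝ) < R' := by linarith
  have h1 : IntegrableOn (fun t => 1 / ψ t ^ (n-1)) (Set.Ioc a R') := by
    have hsub : Set.Icc a R' ⊆ Set.Ioi 0 := fun x hx => lt_of_lt_of_le ha hx.1
    exact (((g_contOn hψA).mono hsub).integrableOn_Icc).mono_set Set.Ioc_subset_Icc_self
  have h2 : IntegrableOn (fun t => 1 / ψ t ^ (n-1)) (Set.Ioi R') := by
    apply Integrable.mono' (g := fun t => t ^ (-2:ℝ)) (integrableOn_Ioi_rpow_of_lt (by norm_num) hR'0)
    · exact ((g_contOn hψA).mono (fun x hx => lt_trans hR'0 hx)).aestronglyMeasurable measurableSet_Ioi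
    · rw [ae_restrict_iff' measurableSet_Ioi]
      filter_upwards with t ht
      have ht0 : 0 < t := lt_trans hR'0 ht
      rw [Real.norm_eq_abs, abs_of_pos (g_pos hψA ht0)]
      exact hR t (le_trans (le_max_left _ _) ht.le)
  have : Set.Ioi a = Set.Ioc a R' ∪ Set.Ioi R' := (Set.Ioc_union_Ioi_eq_Ioi haR').symm
  rw [this]
  exact h1.union h2

lemma Ifun_split (hn : 3 ≤ n) (hμ : -1 < μ) (hC : 0 < C) (hψA : classA ψ)
    (hψratio : Tendsto (fun r => (deriv ψ r / ψ r) / (C * r ^ μ)) atTop (nhds 1))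
    {a b : ℝ} (ha : 0 < a) (hab : a ≤ b) :
    Ifun n ψ a = (∫ t in a..b, 1 / ψ t ^ (n-1)) + Ifun n ψ b := by
  have hb : 0 < b := lt_of_lt_of_le ha hab
  rw [intervalIntegral.integral_of_le hab]
  unfold Ifun
  rw [← MeasureTheory.setIntegral_union (Set.Ioc_disjoint_Ioi le_rfl) measurableSet_Ioi
    ((g_integrableOn hn hμ hC hψA hψratio a ha).mono_set Set.Ioc_subset_Ioi_self)
    (g_integrableOn hn hμ hC hψA hψratio b hb), Set.Ioc_union_Ioi_eq_Ioi hab]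

lemma Ifun_nonneg (hψA : classA ψ) {a : ℝ} (ha : 0 < a) : 0 ≤ Ifun n ψ a := by
  apply MeasureTheory.setIntegral_nonneg measurableSet_Ioi
  intro t ht
  exact (g_pos hψA (lt_trans ha ht)).le

lemma intInt_pos (hn : 3 ≤ n) (hμ : -1 < μ) (hC : 0 < C) (hψA : classA ψ)
    (hψratio : Tendsto (fun r => (deriv ψ r / ψ r) / (C * r ^ μ)) atTop (nhds 1))
    {a b : ℝ} (ha : 0 < a) (hab : a < b) :
    0 < ∫ t in a..b, 1 / ψ t ^ (n-1) := by
  apply intervalIntegral.intervalIntegral_pos_of_pos_on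
  · rw [intervalIntegrable_iff, Set.uIoc_of_le hab.le]
    exact ((g_integrableOn hn hμ hC hψA hψratio a ha).mono_set Set.Ioc_subset_Ioi_self)
  · exact fun x hx => g_pos hψA (lt_trans ha hx.1)
  · exact hab

lemma Ifun_pos (hn : 3 ≤ n) (hμ : -1 < μ) (hC : 0 < C) (hψA : classA ψ)
    (hψratio : Tendsto (fun r => (deriv ψ r / ψ r) / (C * r ^ μ)) atTop (nhds 1))
    {a : ℝ} (ha : 0 < a) : 0 < Ifun n ψ a := by
  rw [Ifun_split hn hμ hC hψA hψratio ha (by linarith : a ≤ a + 1)]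
  have h1 := intInt_pos hn hμ hC hψA hψratio ha (by linarith : a < a + 1)
  have h2 := Ifun_nonneg hψA (show 0 < a + 1 by linarith) (n := n)
  linarith

lemma Ifun_strictAntiOn (hn : 3 ≤ n) (hμ : -1 < μ) (hC : 0 < C) (hψA : classA ψ)
    (hψratio : Tendsto (fun r => (deriv ψ r / ψ r) / (C * r ^ μ)) atTop (nhds 1)) :
    StrictAntiOn (Ifun n ψ) (Set.Ioi 0) := by
  intro a ha b hb hab
  rw [Ifun_split hn hμ hC hψA hψratio ha hab.le]
  have := intInt_pos hn hμ hC hψA hψratio ha hab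
  linarith

lemma Ifun_hasDeriv (hn : 3 ≤ n) (hμ : -1 < μ) (hC : 0 < C) (hψA : classA ψ)
    (hψratio : Tendsto (fun r => (deriv ψ r / ψ r) / (C * r ^ μ)) atTop (nhds 1))
    {r : ℝ} (hr : 0 < r) :
    HasDerivAt (Ifun n ψ) (-(1 / ψ r ^ (n-1))) r := by
  set a := r / 2 with ha
  have ha0 : 0 < a := by positivity
  have har : a < r := by rw [ha]; linarith
  have hint : IntervalIntegrable (fun t => 1 / ψ t ^ (n-1)) volume a r := by
    rw [intervalIntegrable_iff, Set.uIoc_of_le har.le]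
    exact ((g_integrableOn hn hμ hC hψA hψratio a ha0).mono_set Set.Ioc_subset_Ioi_self)
  have hmeas : StronglyMeasurableAtFilter (fun t => 1 / ψ t ^ (n-1)) (nhds r) volume :=
    AEStronglyMeasurable.stronglyMeasurableAtFilter_of_mem
      ((g_contOn hψA).aestronglyMeasurable measurableSet_Ioi) (Ioi_mem_nhds hr)
  have hcont : ContinuousAt (fun t => 1 / ψ t ^ (n-1)) r :=
    (g_contOn hψA).continuousAt (Ioi_mem_nhds hr)
  have hFTC := (intervalIntegral.integral_hasDerivAt_right hint hmeas hcont).neg.const_add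
    (Ifun n ψ a)
  apply hFTC.congr_of_eventuallyEq
  filter_upwards [Ioi_mem_nhds har] with x hx
  have h := Ifun_split hn hμ hC hψA hψratio ha0 (le_of_lt hx)
  show Ifun n ψ x = Ifun n ψ a + -∫ t in a..x, 1 / ψ t ^ (n-1)
  linarith

lemma Ifun_tendsto_zero (hn : 3 ≤ n) (hμ : -1 < μ) (hC : 0 < C) (hψA : classA ψ)
    (hψratio : Tendsto (fun r => (deriv ψ r / ψ r) / (C * r ^ μ)) atTop (nhds 1)) :
    Tendsto (Ifun n ψ) atTop (nhds 0) := by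
  have h := MeasureTheory.intervalIntegral_tendsto_integral_Ioi 1
    (g_integrableOn hn hμ hC hψA hψratio 1 one_pos) tendsto_id
  have h2 : Tendsto (fun b => Ifun n ψ 1 - ∫ t in (1:ℝ)..b, 1 / ψ t ^ (n-1)) atTop
      (nhds (Ifun n ψ 1 - Ifun n ψ 1)) := (tendsto_const_nhds).sub h
  rw [sub_self] at h2
  apply h2.congr'
  filter_upwards [eventually_ge_atTop (1:ℝ)] with b hb
  have := Ifun_split hn hμ hC hψA hψratio one_pos hb
  linarith

end BB

section CC
variable {n : ℕ} {μ C : ℝ} {ψ : ℝ → ℝ}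

lemma psi_near_zero (hψA : classA ψ) : ∀ᶠ t in nhdsWithin (0:ℝ) (Set.Ioi 0), ψ t ≤ 2 * t := by
  have hd : DifferentiableWithinAt ℝ ψ (Set.Ici 0) 0 :=
    (hψA.2.1.differentiableOn one_ne_zero) 0 Set.self_mem_Ici
  have h1 : HasDerivWithinAt ψ 1 (Set.Ici 0) 0 := hψA.2.2.2.1 ▸ hd.hasDerivWithinAt
  rw [hasDerivWithinAt_iff_tendsto_slope] at h1
  have hs : Set.Ici (0:ℝ) \ {0} = Set.Ioi 0 := by
    ext x
    simp only [Set.mem_diff, Set.mem_Ici, Set.mem_singleton_iff, Set.mem_Ioi]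
    constructor
    · rintro ⟨h1, h2⟩; exact lt_of_le_of_ne h1 (Ne.symm h2)
    · intro h; exact ⟨h.le, ne_of_gt h⟩
  rw [hs] at h1
  have h2 := h1.eventually (eventually_le_nhds (show (1:ℝ) < 2 by norm_num))
  filter_upwards [h2, self_mem_nhdsWithin] with t ht ht0
  rw [slope_def_field, hψA.2.2.1, sub_zero, sub_zero, div_le_iff₀ ht0] at ht
  linarith

lemma Ifun_tendsto_atTop (hn : 3 ≤ n) (hμ : -1 < μ) (hC : 0 < C) (hψA : classA ψ)
    (hψratio : Tendsto (fun r => (deriv ψ r / ψ r) / (C * r ^ μ)) atTop (nhds 1)) :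
    Tendsto (Ifun n ψ) (nhdsWithin (0:ℝ) (Set.Ioi 0)) atTop := by
  obtain ⟨δ, hδ0, hδ⟩ := mem_nhdsGT_iff_exists_Ioo_subset.1 (psi_near_zero hψA)
  rw [Set.mem_Ioi] at hδ0
  set δ' := min δ (1/2) with hδ'
  have hδ'0 : 0 < δ' := lt_min hδ0 (by norm_num)
  set d := δ' / 2 with hd
  have hd0 : 0 < d := by positivity
  have hdδ : d < δ' := by rw [hd]; linarith
  have key : ∀ r ∈ Set.Ioo 0 d, 1/(4*r) - 1/(4*d) ≤ Ifun n ψ r := by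
    intro r hr
    obtain ⟨hr0, hrd⟩ := hr
    have h1 : Ifun n ψ r = (∫ t in r..d, 1 / ψ t ^ (n-1)) + Ifun n ψ d :=
      Ifun_split hn hμ hC hψA hψratio hr0 hrd.le
    have h2 : ∫ t in r..d, 1/(4*t^2) ≤ ∫ t in r..d, 1 / ψ t ^ (n-1) := by
      apply intervalIntegral.integral_mono_on hrd.le
      · apply ContinuousOn.intervalIntegrable
        apply ContinuousOn.div continuousOn_const
        · exact (continuousOn_const.mul (continuousOn_pow 2))
        · intro x hx
          rw [Set.uIcc_of_le hrd.le] at hx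
          have : 0 < x := lt_of_lt_of_le hr0 hx.1
          positivity
      · rw [intervalIntegrable_iff, Set.uIoc_of_le hrd.le]
        exact ((g_integrableOn hn hμ hC hψA hψratio r hr0).mono_set Set.Ioc_subset_Ioi_self)
      · intro t ht
        have ht0 : 0 < t := lt_of_lt_of_le hr0 ht.1
        have htδ : t < δ := lt_of_le_of_lt ht.2 (lt_of_lt_of_le (lt_of_lt_of_le hdδ le_rfl)
          (le_trans (min_le_left _ _) le_rfl))
        have hψt : ψ t ≤ 2 * t := hδ ⟨ht0, htδ⟩
        have h2t : 2 * t ≤ 1 := by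
          have : t ≤ d := ht.2
          have : t < δ' := lt_of_le_of_lt ht.2 hdδ
          have : t < 1/2 := lt_of_lt_of_le this (min_le_right _ _)
          linarith
        have hψpos : 0 < ψ t := hψA.2.2.2.2 t ht0
        have hp1 : ψ t ^ (n-1) ≤ (2*t) ^ (n-1) := pow_le_pow_left₀ hψpos.le hψt _
        have hp2 : (2*t) ^ (n-1) ≤ (2*t) ^ 2 :=
          pow_le_pow_of_le_one (by positivity) h2t (by omega)
        have hp3 : ψ t ^ (n-1) ≤ 4 * t^2 := by
          calc ψ t ^ (n-1) ≤ (2*t)^2 := le_trans hp1 hp2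
            _ = 4 * t^2 := by ring
        rw [one_div, one_div]
        exact inv_anti₀ (by positivity) hp3
    have h3 : ∫ t in r..d, 1/(4*t^2) = 1/(4*r) - 1/(4*d) := by
      have hderiv : ∀ x ∈ Set.uIcc r d, HasDerivAt (fun t => -(4*t)⁻¹) (1/(4*x^2)) x := by
        intro x hx
        rw [Set.uIcc_of_le hrd.le] at hx
        have hx0 : 0 < x := lt_of_lt_of_le hr0 hx.1
        have h := (((hasDerivAt_id x).const_mul (4:ℝ)).inv (by positivity)).neg
        refine h.congr_deriv (Eq.symm ?_)
        simp only [id_eq]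
        field_simp
      have hint : IntervalIntegrable (fun t => 1/(4*t^2)) volume r d := by
        apply ContinuousOn.intervalIntegrable
        apply ContinuousOn.div continuousOn_const
        · exact (continuousOn_const.mul (continuousOn_pow 2))
        · intro x hx
          rw [Set.uIcc_of_le hrd.le] at hx
          have : 0 < x := lt_of_lt_of_le hr0 hx.1
          positivity
      rw [intervalIntegral.integral_eq_sub_of_hasDerivAt hderiv hint]
      field_simp
      ring
    have h4 := Ifun_nonneg hψA hd0 (n := n)
    linarith [h3 ▸ h2]
  apply tendsto_atTop_mono' _ _ ((tendsto_inv_nhdsGT_zero.const_mul_atTop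
    (show (0:ℝ) < 1/4 by norm_num)).atTop_add (tendsto_const_nhds (x := -(1/(4*d)))))
  filter_upwards [Ioo_mem_nhdsGT_of_mem (Set.left_mem_Ico.2 hd0)] with r hr
  have := key r hr
  calc 1/4 * r⁻¹ + -(1/(4*d)) = 1/(4*r) - 1/(4*d) := by
        rw [sub_eq_add_neg, one_div (4*r), mul_inv]; ring
    _ ≤ Ifun n ψ r := this

end CC


section DD
variable {n : ℕ} {μ C : ℝ} {ψ : ℝ → ℝ}

lemma Svar_eq (n : ℕ) (ψ : ℝ → ℝ) (r : ℝ) :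
    Svar n ψ r = (((n : ℝ) - 2) * Ifun n ψ r) ^ (-(1 / ((n : ℝ) - 2))) := rfl

lemma n2_pos (hn : 3 ≤ n) : (0:ℝ) < (n:ℝ) - 2 := by
  have : (3:ℝ) ≤ (n:ℝ) := by exact_mod_cast hn
  linarith

lemma rpow_negc_tendsto {c : ℝ} (hc : 0 < c) :
    Tendsto (fun x : ℝ => x ^ (-c)) (nhdsWithin (0:ℝ) (Set.Ioi 0)) atTop := by
  have h1 : Tendsto (fun x : ℝ => x ^ c) (nhdsWithin (0:ℝ) (Set.Ioi 0))
      (nhdsWithin (0:ℝ) (Set.Ioi 0)) := by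
    rw [tendsto_nhdsWithin_iff]
    constructor
    · have hco : ContinuousAt (fun x : ℝ => x ^ c) 0 :=
        Real.continuousAt_rpow_const 0 c (Or.inr hc.le)
      have := hco.continuousWithinAt (s := Set.Ioi 0)
      rw [ContinuousWithinAt, Real.zero_rpow (ne_of_gt hc)] at this
      exact this
    · filter_upwards [self_mem_nhdsWithin] with x hx
      exact Real.rpow_pos_of_pos hx c
  have h2 := tendsto_inv_nhdsGT_zero.comp h1
  apply h2.congr'
  filter_upwards [self_mem_nhdsWithin] with x hx
  rw [Function.comp_apply, ← Real.rpow_neg (le_of_lt hx)]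

lemma Svar_pos (hn : 3 ≤ n) (hμ : -1 < μ) (hC : 0 < C) (hψA : classA ψ)
    (hψratio : Tendsto (fun r => (deriv ψ r / ψ r) / (C * r ^ μ)) atTop (nhds 1))
    {r : ℝ} (hr : 0 < r) : 0 < Svar n ψ r := by
  rw [Svar_eq]
  exact Real.rpow_pos_of_pos (mul_pos (n2_pos hn) (Ifun_pos hn hμ hC hψA hψratio hr)) _

lemma Svar_strictMonoOn (hn : 3 ≤ n) (hμ : -1 < μ) (hC : 0 < C) (hψA : classA ψ)
    (hψratio : Tendsto (fun r => (deriv ψ r / ψ r) / (C * r ^ μ)) atTop (nhds 1)) :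
    StrictMonoOn (Svar n ψ) (Set.Ioi 0) := by
  intro a ha b hb hab
  rw [Svar_eq, Svar_eq]
  have h1 : Ifun n ψ b < Ifun n ψ a := Ifun_strictAntiOn hn hμ hC hψA hψratio ha hb hab
  have h2 : ((n:ℝ)-2) * Ifun n ψ b < ((n:ℝ)-2) * Ifun n ψ a :=
    mul_lt_mul_of_pos_left h1 (n2_pos hn)
  exact Real.rpow_lt_rpow_of_neg
    (mul_pos (n2_pos hn) (Ifun_pos hn hμ hC hψA hψratio (Set.mem_Ioi.1 hb))) h2
    (by have := n2_pos hn
        have h01 : 0 < 1 / ((n:ℝ)-2) := by positivity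
        linarith)

lemma Svar_tendsto_atTop (hn : 3 ≤ n) (hμ : -1 < μ) (hC : 0 < C) (hψA : classA ψ)
    (hψratio : Tendsto (fun r => (deriv ψ r / ψ r) / (C * r ^ μ)) atTop (nhds 1)) :
    Tendsto (Svar n ψ) atTop atTop := by
  have hc : 0 < 1 / ((n:ℝ)-2) := by have := n2_pos hn; positivity
  have hbase : Tendsto (fun r => ((n:ℝ)-2) * Ifun n ψ r) atTop
      (nhdsWithin (0:ℝ) (Set.Ioi 0)) := by
    rw [tendsto_nhdsWithin_iff]
    constructor
    · have := (Ifun_tendsto_zero hn hμ hC hψA hψratio).const_mul ((n:ℝ)-2)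
      simpa using this
    · filter_upwards [eventually_gt_atTop (0:ℝ)] with r hr
      exact mul_pos (n2_pos hn) (Ifun_pos hn hμ hC hψA hψratio hr)
  exact (rpow_negc_tendsto hc).comp hbase

lemma Svar_tendsto_zero (hn : 3 ≤ n) (hμ : -1 < μ) (hC : 0 < C) (hψA : classA ψ)
    (hψratio : Tendsto (fun r => (deriv ψ r / ψ r) / (C * r ^ μ)) atTop (nhds 1)) :
    Tendsto (Svar n ψ) (nhdsWithin (0:ℝ) (Set.Ioi 0)) (nhds 0) := by
  have hc : 0 < 1 / ((n:ℝ)-2) := by have := n2_pos hn; positivity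
  have hbase : Tendsto (fun r => ((n:ℝ)-2) * Ifun n ψ r) (nhdsWithin (0:ℝ) (Set.Ioi 0)) atTop :=
    (Ifun_tendsto_atTop hn hμ hC hψA hψratio).const_mul_atTop (n2_pos hn)
  exact (tendsto_rpow_neg_atTop hc).comp hbase

lemma Svar_contOn (hn : 3 ≤ n) (hμ : -1 < μ) (hC : 0 < C) (hψA : classA ψ)
    (hψratio : Tendsto (fun r => (deriv ψ r / ψ r) / (C * r ^ μ)) atTop (nhds 1)) :
    ContinuousOn (Svar n ψ) (Set.Ioi 0) := by
  have h1 : ContinuousOn (Ifun n ψ) (Set.Ioi 0) := fun r hr =>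
    (Ifun_hasDeriv hn hμ hC hψA hψratio hr).continuousAt.continuousWithinAt
  apply ContinuousOn.rpow_const (continuousOn_const.mul h1)
  intro x hx
  exact Or.inl (ne_of_gt (mul_pos (n2_pos hn) (Ifun_pos hn hμ hC hψA hψratio hx)))

lemma Svar_surj (hn : 3 ≤ n) (hμ : -1 < μ) (hC : 0 < C) (hψA : classA ψ)
    (hψratio : Tendsto (fun r => (deriv ψ r / ψ r) / (C * r ^ μ)) atTop (nhds 1))
    {s : ℝ} (hs : 0 < s) : ∃ r, 0 < r ∧ Svar n ψ r = s := by
  have h1 : ∀ᶠ a in nhdsWithin (0:ℝ) (Set.Ioi 0), Svar n ψ a < s :=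
    (Svar_tendsto_zero hn hμ hC hψA hψratio).eventually (eventually_lt_nhds hs)
  obtain ⟨a, haS, ha0'⟩ := (h1.and self_mem_nhdsWithin).exists
  have ha0 : (0:ℝ) < a := ha0'
  have h2 : ∀ᶠ b in atTop, s < Svar n ψ b ∧ a < b :=
    ((Svar_tendsto_atTop hn hμ hC hψA hψratio).eventually_gt_atTop s).and (eventually_gt_atTop a)
  obtain ⟨b, hbS, hab⟩ := h2.exists
  have hcont : ContinuousOn (Svar n ψ) (Set.Icc a b) :=
    (Svar_contOn hn hμ hC hψA hψratio).mono (fun x hx => lt_of_lt_of_le ha0 hx.1)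
  have := intermediate_value_Ioo hab.le hcont (Set.mem_Ioo.2 ⟨haS, hbS⟩)
  obtain ⟨r, hr, hrs⟩ := this
  exact ⟨r, lt_trans ha0 hr.1, hrs⟩

open Classical in
noncomputable def rOfDef (n : ℕ) (ψ : ℝ → ℝ) (s : ℝ) : ℝ :=
  if h : ∃ r, 0 < r ∧ Svar n ψ r = s then h.choose else 1

lemma rOf_spec (hn : 3 ≤ n) (hμ : -1 < μ) (hC : 0 < C) (hψA : classA ψ)
    (hψratio : Tendsto (fun r => (deriv ψ r / ψ r) / (C * r ^ μ)) atTop (nhds 1))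
    {s : ℝ} (hs : 0 < s) : 0 < rOfDef n ψ s ∧ Svar n ψ (rOfDef n ψ s) = s := by
  have h := Svar_surj hn hμ hC hψA hψratio hs
  classical
  rw [rOfDef]
  rw [dif_pos h]
  exact h.choose_spec

lemma rOf_left (hn : 3 ≤ n) (hμ : -1 < μ) (hC : 0 < C) (hψA : classA ψ)
    (hψratio : Tendsto (fun r => (deriv ψ r / ψ r) / (C * r ^ μ)) atTop (nhds 1))
    {r : ℝ} (hr : 0 < r) : rOfDef n ψ (Svar n ψ r) = r := by
  have hs : 0 < Svar n ψ r := Svar_pos hn hμ hC hψA hψratio hr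
  obtain ⟨h1, h2⟩ := rOf_spec hn hμ hC hψA hψratio hs
  exact (Svar_strictMonoOn hn hμ hC hψA hψratio).injOn h1 hr h2

lemma rOf_tendsto_atTop (hn : 3 ≤ n) (hμ : -1 < μ) (hC : 0 < C) (hψA : classA ψ)
    (hψratio : Tendsto (fun r => (deriv ψ r / ψ r) / (C * r ^ μ)) atTop (nhds 1)) :
    Tendsto (rOfDef n ψ) atTop atTop := by
  rw [tendsto_atTop]
  intro M
  set M' := max M 1 with hM'
  have hM'0 : (0:ℝ) < M' := lt_of_lt_of_le one_pos (le_max_right _ _)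
  filter_upwards [eventually_gt_atTop (Svar n ψ M'), eventually_gt_atTop (0:ℝ)] with s hs hs0
  obtain ⟨h1, h2⟩ := rOf_spec hn hμ hC hψA hψratio hs0
  by_contra hcon
  push_neg at hcon
  have hle : rOfDef n ψ s ≤ M' := le_trans hcon.le (le_max_left _ _)
  have : Svar n ψ (rOfDef n ψ s) ≤ Svar n ψ M' := by
    rcases eq_or_lt_of_le hle with h | h
    · rw [h]
    · exact (Svar_strictMonoOn hn hμ hC hψA hψratio h1 hM'0 h).le
  rw [h2] at this
  linarith

end DD

section EE
variable {n : ℕ} {μ C : ℝ} {ψ : ℝ → ℝ}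

lemma E_tendsto (hn : 3 ≤ n) (hμ : -1 < μ) (hC : 0 < C) (hψA : classA ψ)
    (hψratio : Tendsto (fun r => (deriv ψ r / ψ r) / (C * r ^ μ)) atTop (nhds 1)) :
    Tendsto (fun r => ((n:ℝ)-1) * C * r ^ μ * ψ r ^ (n-1) * Ifun n ψ r) atTop (nhds 1) := by
  obtain ⟨k, hk⟩ : ∃ k, n - 1 = k + 2 := ⟨n - 3, by omega⟩
  have hn1 : (0:ℝ) < (n:ℝ) - 1 := by
    have : (3:ℝ) ≤ (n:ℝ) := by exact_mod_cast hn
    linarith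
  have hn1cast : ((n - 1 : ℕ) : ℝ) = (n:ℝ) - 1 := by
    have : (1:ℕ) ≤ n := by omega
    push_cast [this]; ring
  set c₀ := (((n:ℝ)-1) * C)⁻¹ with hc₀
  have hc₀pos : 0 < c₀ := by positivity
  set G : ℝ → ℝ := fun r => c₀ * (r ^ (-μ) * (ψ r ^ (n-1))⁻¹) with hG
  set V : ℝ → ℝ := fun r => μ / (((n:ℝ)-1) * C * r ^ (1+μ)) with hV
  set W : ℝ → ℝ := fun r => (deriv ψ r / ψ r) / (C * r ^ μ) with hW
  set G' : ℝ → ℝ := fun r => (V r + W r) * (-(1 / ψ r ^ (n-1))) with hG'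
  -- derivative of G
  have hGd : ∀ r : ℝ, 0 < r → HasDerivAt G (G' r) r := by
    intro r hr
    have hψpos : 0 < ψ r := hψA.2.2.2.2 r hr
    have h1 : HasDerivAt (fun x : ℝ => x ^ (-μ)) (-μ * r ^ (-μ-1)) r :=
      Real.hasDerivAt_rpow_const (Or.inl (ne_of_gt hr))
    have h2 : HasDerivAt (fun x => ψ x ^ (n-1))
        (((n-1:ℕ):ℝ) * ψ r ^ (n-1-1) * deriv ψ r) r := (psi_hasDeriv hψA hr).pow (n-1)
    have h3 := h2.inv (pow_ne_zero _ (ne_of_gt hψpos))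
    have h4 := ((h1.mul h3).const_mul c₀)
    refine h4.congr_deriv (Eq.symm ?_)
    simp only [hG', hV, hW, Pi.inv_apply]
    rw [hn1cast]
    have hxμ : (0:ℝ) < r ^ μ := Real.rpow_pos_of_pos hr _
    have e1 : r ^ (-μ) = (r ^ μ)⁻¹ := Real.rpow_neg hr.le μ
    have e2 : r ^ (-μ-1) = (r ^ μ * r)⁻¹ := by
      rw [show -μ-1 = -(μ+1) by ring, Real.rpow_neg hr.le, Real.rpow_add hr, Real.rpow_one]
    have e3 : r ^ (1+μ) = r * r ^ μ := by
      rw [Real.rpow_add hr, Real.rpow_one]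
    rw [e1, e2, e3, show n - 1 - 1 = k + 1 by omega, hk]
    have hψne : ψ r ≠ 0 := ne_of_gt hψpos
    have hnC : (n:ℝ) * C - C ≠ 0 := by
      have : (0:ℝ) < (n:ℝ) * C - C := by nlinarith
      exact ne_of_gt this
    rw [hc₀]
    field_simp [hnC]
    ring
  -- eventual facts
  have hWV : Tendsto (fun r => V r + W r) atTop (nhds 1) := by
    have hVt : Tendsto V atTop (nhds 0) := by
      rw [hV]
      have h := (tendsto_rpow_atTop (show (0:ℝ) < 1 + μ by linarith)).const_mul_atTop
        (show (0:ℝ) < ((n:ℝ)-1) * C by positivity)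
      have h2 := h.inv_tendsto_atTop
      have h3 := h2.const_mul μ
      rw [mul_zero] at h3
      apply h3.congr
      intro x
      simp [div_eq_mul_inv]
    have := hVt.add hψratio
    rw [zero_add] at this
    exact this
  have hVWpos : ∀ᶠ r in atTop, (0:ℝ) < V r + W r :=
    hWV.eventually (eventually_gt_nhds one_pos)
  -- L'Hopital
  have hItop := Ifun_tendsto_zero hn hμ hC hψA hψratio
  have hGtop : Tendsto G atTop (nhds 0) := by
    have hbig := g_bound hn hμ hC hψA hψratio
    have hlim : Tendsto (fun r : ℝ => c₀ * r ^ (-(μ+2))) atTop (nhds (c₀ * 0)) :=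
      (tendsto_rpow_neg_atTop (by linarith)).const_mul c₀
    rw [mul_zero] at hlim
    apply tendsto_of_tendsto_of_tendsto_of_le_of_le' (g := fun _ : ℝ => (0:ℝ))
      (h := fun r : ℝ => c₀ * r ^ (-(μ+2))) tendsto_const_nhds hlim
    · filter_upwards [eventually_gt_atTop (0:ℝ)] with r hr
      have hψpos : 0 < ψ r := hψA.2.2.2.2 r hr
      rw [hG]
      beta_reduce
      have h2 : (0:ℝ) < r ^ (-μ) := Real.rpow_pos_of_pos hr _
      positivity
    · filter_upwards [hbig, eventually_gt_atTop (0:ℝ)] with r hbd hr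
      rw [hG]
      beta_reduce
      have h2 : (0:ℝ) < r ^ (-μ) := Real.rpow_pos_of_pos hr _
      have h3 : (ψ r ^ (n-1))⁻¹ ≤ r ^ (-2:ℝ) := by
        rw [← one_div]; exact hbd
      have : r ^ (-μ) * (ψ r ^ (n-1))⁻¹ ≤ r ^ (-μ) * r ^ (-2:ℝ) :=
        mul_le_mul_of_nonneg_left h3 h2.le
      calc c₀ * (r ^ (-μ) * (ψ r ^ (n-1))⁻¹) ≤ c₀ * (r ^ (-μ) * r ^ (-2:ℝ)) := by
            exact mul_le_mul_of_nonneg_left this hc₀pos.le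
        _ = c₀ * r ^ (-(μ+2)) := by
            rw [← Real.rpow_add hr, show (-μ) + (-2:ℝ) = -(μ+2) by ring]
  have hdiv : Tendsto (fun r => (-(1 / ψ r ^ (n-1))) / G' r) atTop (nhds 1) := by
    have h1 : Tendsto (fun r => (V r + W r)⁻¹) atTop (nhds 1) := by
      have := hWV.inv₀ one_ne_zero
      rw [inv_one] at this
      exact this
    apply h1.congr'
    filter_upwards [hVWpos, eventually_gt_atTop (0:ℝ)] with r hpos hr
    have hψpos : 0 < ψ r := hψA.2.2.2.2 r hr
    have hgne : -(1 / ψ r ^ (n-1)) ≠ 0 := by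
      have : (0:ℝ) < 1 / ψ r ^ (n-1) := by positivity
      intro h; rw [neg_eq_zero] at h; linarith
    rw [hG']
    rw [div_mul_eq_div_div_swap, div_self hgne, one_div]
  have hmain := HasDerivAt.lhopital_zero_atTop
    (f' := fun r => -(1 / ψ r ^ (n-1))) (g' := G')
    (by filter_upwards [eventually_gt_atTop (0:ℝ)] with r hr
        exact Ifun_hasDeriv hn hμ hC hψA hψratio hr)
    (by filter_upwards [eventually_gt_atTop (0:ℝ)] with r hr
        exact hGd r hr)
    (by filter_upwards [hVWpos, eventually_gt_atTop (0:ℝ)] with r hpos hr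
        have hψpos : 0 < ψ r := hψA.2.2.2.2 r hr
        rw [hG']
        apply mul_ne_zero (ne_of_gt hpos)
        have : (0:ℝ) < 1 / ψ r ^ (n-1) := by positivity
        intro h; rw [neg_eq_zero] at h; linarith)
    hItop hGtop hdiv
  apply hmain.congr'
  filter_upwards [eventually_gt_atTop (0:ℝ)] with r hr
  have hψpos : 0 < ψ r := hψA.2.2.2.2 r hr
  rw [hG]
  beta_reduce
  have hxμ : (0:ℝ) < r ^ μ := Real.rpow_pos_of_pos hr _
  have e1 : r ^ (-μ) = (r ^ μ)⁻¹ := Real.rpow_neg hr.le μ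
  rw [e1]
  have hψne : ψ r ^ (n-1) ≠ 0 := pow_ne_zero _ (ne_of_gt hψpos)
  rw [hc₀]
  have hnC : (n:ℝ) * C - C ≠ 0 := by
    have : (0:ℝ) < (n:ℝ) * C - C := by nlinarith
    exact ne_of_gt this
  field_simp [hnC]

end EE

section FF
variable {n : ℕ} {μ C : ℝ} {ψ : ℝ → ℝ}

lemma logS_asymp (hn : 3 ≤ n) (hμ : -1 < μ) (hC : 0 < C) (hψA : classA ψ)
    (hψratio : Tendsto (fun r => (deriv ψ r / ψ r) / (C * r ^ μ)) atTop (nhds 1)) :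
    Tendsto (fun r => Real.log (Svar n ψ r) /
      (((((n:ℝ)-1) * C / ((((n:ℝ)-2)) * (1+μ)))) * r ^ (1+μ))) atTop (nhds 1) := by
  have h1μ : (0:ℝ) < 1 + μ := by linarith
  have hn2 := n2_pos hn
  have hn1 : (0:ℝ) < (n:ℝ) - 1 := by linarith
  have hn1cast : ((n - 1 : ℕ) : ℝ) = (n:ℝ) - 1 := by
    have : (1:ℕ) ≤ n := by omega
    push_cast [this]; ring
  set γ : ℝ := ((n:ℝ)-1) * C / (((n:ℝ)-2) * (1+μ)) with hγdef
  have hγ : 0 < γ := by positivity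
  set E : ℝ → ℝ := fun r => ((n:ℝ)-1) * C * r ^ μ * ψ r ^ (n-1) * Ifun n ψ r with hEdef
  have hE : Tendsto E atTop (nhds 1) := E_tendsto hn hμ hC hψA hψratio
  have hlogE : Tendsto (fun r => Real.log (E r)) atTop (nhds 0) := by
    have h := (Real.continuousAt_log (by norm_num : (1:ℝ) ≠ 0)).tendsto.comp hE
    rwa [Real.log_one] at h
  have hinvP : Tendsto (fun r => (γ * r ^ (1+μ))⁻¹) atTop (nhds 0) :=
    ((tendsto_rpow_atTop h1μ).const_mul_atTop hγ).inv_tendsto_atTop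
  have hlogr : Tendsto (fun r : ℝ => Real.log r / r ^ (1+μ)) atTop (nhds 0) :=
    (isLittleO_log_rpow_atTop h1μ).tendsto_div_nhds_zero
  have hlψ := log_psi_asymp hμ hC hψA hψratio
  -- the limit function
  have hL : Tendsto (fun r =>
      (-(1/((n:ℝ)-2))) * ((Real.log ((n:ℝ)-2) + Real.log (E r) - Real.log (((n:ℝ)-1)*C))
          * (γ * r ^ (1+μ))⁻¹
        + (-μ) * (Real.log r / r ^ (1+μ)) * γ⁻¹
        + (-((n:ℝ)-1)) * (Real.log (ψ r) / (C * r ^ (1+μ) / (1+μ))) * ((C/(1+μ)) * γ⁻¹)))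
      atTop (nhds ((-(1/((n:ℝ)-2))) * ((Real.log ((n:ℝ)-2) + 0 - Real.log (((n:ℝ)-1)*C)) * 0
        + (-μ) * 0 * γ⁻¹ + (-((n:ℝ)-1)) * 1 * ((C/(1+μ)) * γ⁻¹)))) := by
    apply Tendsto.const_mul
    apply Tendsto.add
    apply Tendsto.add
    · exact (((tendsto_const_nhds.add hlogE).sub tendsto_const_nhds).mul hinvP)
    · exact ((hlogr.const_mul (-μ)).mul_const γ⁻¹)
    · exact ((hlψ.const_mul (-((n:ℝ)-1))).mul_const ((C/(1+μ)) * γ⁻¹))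
  have hval : (-(1/((n:ℝ)-2))) * ((Real.log ((n:ℝ)-2) + 0 - Real.log (((n:ℝ)-1)*C)) * 0
      + (-μ) * 0 * γ⁻¹ + (-((n:ℝ)-1)) * 1 * ((C/(1+μ)) * γ⁻¹)) = 1 := by
    rw [hγdef]
    field_simp
    ring
  rw [hval] at hL
  apply hL.congr'
  have hEev : ∀ᶠ r in atTop, 0 < E r := hE.eventually (eventually_gt_nhds one_pos)
  filter_upwards [hEev, eventually_gt_atTop (0:ℝ), eventually_gt_atTop (1:ℝ)] with r hEr hr0 hr1
  have hψpos : 0 < ψ r := hψA.2.2.2.2 r hr0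
  have hIpos : 0 < Ifun n ψ r := Ifun_pos hn hμ hC hψA hψratio hr0
  have hrμ : (0:ℝ) < r ^ μ := Real.rpow_pos_of_pos hr0 _
  have hrP : (0:ℝ) < r ^ (1+μ) := Real.rpow_pos_of_pos hr0 _
  have hψp : (0:ℝ) < ψ r ^ (n-1) := by positivity
  -- log of Svar
  have hlogS : Real.log (Svar n ψ r) =
      (-(1/((n:ℝ)-2))) * (Real.log ((n:ℝ)-2) + Real.log (Ifun n ψ r)) := by
    rw [Svar_eq, Real.log_rpow (by positivity), Real.log_mul (ne_of_gt hn2) (ne_of_gt hIpos)]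
  -- log of Ifun
  have hIeq : Ifun n ψ r = E r / (((n:ℝ)-1) * C * r ^ μ * ψ r ^ (n-1)) := by
    rw [hEdef]
    field_simp
  have hlogI : Real.log (Ifun n ψ r) = Real.log (E r) - (Real.log (((n:ℝ)-1)*C)
      + μ * Real.log r + ((n:ℝ)-1) * Real.log (ψ r)) := by
    rw [hIeq, Real.log_div (ne_of_gt hEr) (by positivity),
      Real.log_mul (by positivity) (ne_of_gt hψp),
      Real.log_mul (by positivity) (ne_of_gt hrμ),
      Real.log_rpow hr0, Real.log_pow, hn1cast]
    try ring
  rw [hlogS, hlogI]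
  have hγne : γ ≠ 0 := ne_of_gt hγ
  field_simp
  ring

end FF

section GG
variable {n : ℕ} {μ C : ℝ} {ψ : ℝ → ℝ}

lemma r_asymp (hn : 3 ≤ n) (hμ : -1 < μ) (hC : 0 < C) (hψA : classA ψ)
    (hψratio : Tendsto (fun r => (deriv ψ r / ψ r) / (C * r ^ μ)) atTop (nhds 1)) :
    Tendsto (fun r => r / ((((1 + μ) / C) * (((n:ℝ)-2)/((n:ℝ)-1))) ^ (1/(1+μ))
      * Real.log (Svar n ψ r) ^ (1/(1+μ)))) atTop (nhds 1) := by
  have h1μ : (0:ℝ) < 1 + μ := by linarith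
  have hn2 := n2_pos hn
  have hn1 : (0:ℝ) < (n:ℝ) - 1 := by linarith
  set p : ℝ := 1/(1+μ) with hp
  set γ : ℝ := ((n:ℝ)-1) * C / (((n:ℝ)-2) * (1+μ)) with hγdef
  have hγ : 0 < γ := by positivity
  set u : ℝ → ℝ := fun r => Real.log (Svar n ψ r) / (γ * r ^ (1+μ)) with hu
  have hut : Tendsto u atTop (nhds 1) := logS_asymp hn hμ hC hψA hψratio
  have hc1 : (((1 + μ) / C) * (((n:ℝ)-2)/((n:ℝ)-1))) ^ p = (γ ^ p)⁻¹ := by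
    rw [show ((1 + μ) / C) * (((n:ℝ)-2)/((n:ℝ)-1)) = γ⁻¹ by rw [hγdef]; field_simp,
      ← Real.inv_rpow hγ.le]
  have hlim : Tendsto (fun r => u r ^ (-p)) atTop (nhds 1) := by
    have := hut.rpow_const (p := -p) (Or.inl one_ne_zero)
    rwa [Real.one_rpow] at this
  apply hlim.congr'
  filter_upwards [hut.eventually (eventually_gt_nhds (show (1:ℝ)/2 < 1 by norm_num)),
    eventually_gt_atTop (0:ℝ)] with r hur hr0
  have hupos : 0 < u r := lt_trans one_half_pos hur
  have hrP : (0:ℝ) < r ^ (1+μ) := Real.rpow_pos_of_pos hr0 _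
  have hlogS : Real.log (Svar n ψ r) = u r * (γ * r ^ (1+μ)) := by
    rw [hu]
    field_simp
  have hpowS : Real.log (Svar n ψ r) ^ p = u r ^ p * γ ^ p * r := by
    rw [hlogS, Real.mul_rpow hupos.le (by positivity), Real.mul_rpow hγ.le hrP.le,
      ← Real.rpow_mul hr0.le, show (1+μ) * p = 1 by rw [hp]; field_simp, Real.rpow_one]
    ring
  rw [hpowS, hc1]
  have hupp : (0:ℝ) < u r ^ p := Real.rpow_pos_of_pos hupos _
  have hγp : (0:ℝ) < γ ^ p := Real.rpow_pos_of_pos hγ _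
  rw [Real.rpow_neg hupos.le]
  field_simp

end GG

section HH
variable {n : ℕ} {μ C : ℝ} {ψ : ℝ → ℝ}

lemma rho_asymp (hn : 3 ≤ n) (hμ : -1 < μ) (hC : 0 < C) (hψA : classA ψ)
    (hψratio : Tendsto (fun r => (deriv ψ r / ψ r) / (C * r ^ μ)) atTop (nhds 1))
    {κ : ℝ} (hκ : κ = (C * (1 + μ) ^ μ) ^ (1 / (1 + μ))) :
    Tendsto (fun r =>
      (ψ r ^ (2 * (n - 1)) / Svar n ψ r ^ (2 * (n - 1))) /
        ((((n : ℝ) - 2) / ((n : ℝ) - 1)) ^ (2 / (1 + μ)) /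
          (κ ^ 2 * Svar n ψ r ^ 2 * Real.log (Svar n ψ r) ^ (2 * μ / (1 + μ)))))
      atTop (nhds 1) := by
  have h1μ : (0:ℝ) < 1 + μ := by linarith
  have hn2 := n2_pos hn
  have hn1 : (0:ℝ) < (n:ℝ) - 1 := by linarith
  have h1μp : (0:ℝ) < (1+μ)^μ := Real.rpow_pos_of_pos h1μ _
  have hκpos : 0 < κ := by rw [hκ]; positivity
  set q : ℝ := 2 * μ / (1 + μ) with hq
  set Dd : ℝ := (((n : ℝ) - 2) / ((n : ℝ) - 1)) ^ (2 / (1 + μ)) with hDd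
  have hDdpos : 0 < Dd := Real.rpow_pos_of_pos (by positivity) _
  set γ : ℝ := ((n:ℝ)-1) * C / (((n:ℝ)-2) * (1+μ)) with hγdef
  have hγ : 0 < γ := by positivity
  set u : ℝ → ℝ := fun r => Real.log (Svar n ψ r) / (γ * r ^ (1+μ)) with hu
  have hut : Tendsto u atTop (nhds 1) := logS_asymp hn hμ hC hψA hψratio
  set E : ℝ → ℝ := fun r => ((n:ℝ)-1) * C * r ^ μ * ψ r ^ (n-1) * Ifun n ψ r with hEdef
  have hE : Tendsto E atTop (nhds 1) := E_tendsto hn hμ hC hψA hψratio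
  set cst : ℝ := κ^2 / Dd * (((n:ℝ)-2)/(((n:ℝ)-1)*C))^2 * γ ^ q with hcst
  have hcstpos : 0 < cst := by positivity
  -- the constant equals 1
  have l1 : Real.log κ = (1/(1+μ)) * (Real.log C + μ * Real.log (1+μ)) := by
    rw [hκ, Real.log_rpow (by positivity), Real.log_mul (ne_of_gt hC) (ne_of_gt h1μp),
      Real.log_rpow h1μ]
  have l2 : Real.log Dd = (2/(1+μ)) * (Real.log ((n:ℝ)-2) - Real.log ((n:ℝ)-1)) := by
    rw [hDd, Real.log_rpow (by positivity), Real.log_div (ne_of_gt hn2) (ne_of_gt hn1)]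
  have l3 : Real.log (γ ^ q) = q * (Real.log ((n:ℝ)-1) + Real.log C
      - (Real.log ((n:ℝ)-2) + Real.log (1+μ))) := by
    rw [Real.log_rpow hγ, hγdef, Real.log_div (by positivity) (by positivity),
      Real.log_mul (ne_of_gt hn1) (ne_of_gt hC), Real.log_mul (ne_of_gt hn2) (ne_of_gt h1μ)]
  have l4 : Real.log (((n:ℝ)-2)/(((n:ℝ)-1)*C)) = Real.log ((n:ℝ)-2)
      - (Real.log ((n:ℝ)-1) + Real.log C) := by
    rw [Real.log_div (ne_of_gt hn2) (by positivity), Real.log_mul (ne_of_gt hn1) (ne_of_gt hC)]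
  have hcst1 : cst = 1 := by
    have hlog : Real.log cst = 0 := by
      rw [hcst, Real.log_mul (by positivity) (ne_of_gt (Real.rpow_pos_of_pos hγ _)),
        Real.log_mul (by positivity) (ne_of_gt (pow_pos (by positivity) 2)),
        Real.log_div (ne_of_gt (pow_pos hκpos 2)) (ne_of_gt hDdpos),
        Real.log_pow, Real.log_pow, l1, l2, l3, l4, hq]
      push_cast
      field_simp
      ring
    have := Real.exp_log hcstpos
    rw [hlog, Real.exp_zero] at this
    exact this.symm
  -- limit
  have hlim : Tendsto (fun r => cst * (E r ^ 2 * u r ^ q)) atTop (nhds 1) := by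
    have h1 : Tendsto (fun r => E r ^ 2) atTop (nhds 1) := by
      have := hE.pow 2
      rwa [one_pow] at this
    have h2 : Tendsto (fun r => u r ^ q) atTop (nhds 1) := by
      have := hut.rpow_const (p := q) (Or.inl one_ne_zero)
      rwa [Real.one_rpow] at this
    have h3 := (h1.mul h2).const_mul cst
    have h4 : cst * (1 * 1) = 1 := by rw [hcst1]; ring
    rwa [h4] at h3
  apply hlim.congr'
  filter_upwards [hut.eventually (eventually_gt_nhds (show (1:ℝ)/2 < 1 by norm_num)),
    hE.eventually (eventually_gt_nhds (show (1:ℝ)/2 < 1 by norm_num)),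
    eventually_gt_atTop (0:ℝ)] with r hur hEr hr0
  have hupos : 0 < u r := lt_trans one_half_pos hur
  have hEpos : 0 < E r := lt_trans one_half_pos hEr
  have hψpos : 0 < ψ r := hψA.2.2.2.2 r hr0
  have hIpos : 0 < Ifun n ψ r := Ifun_pos hn hμ hC hψA hψratio hr0
  have hSpos : 0 < Svar n ψ r := Svar_pos hn hμ hC hψA hψratio hr0
  have hrμ : (0:ℝ) < r ^ μ := Real.rpow_pos_of_pos hr0 _
  have hrP : (0:ℝ) < r ^ (1+μ) := Real.rpow_pos_of_pos hr0 _
  have hψp : (0:ℝ) < ψ r ^ (n-1) := by positivity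
  have hn2cast : ((n - 2 : ℕ) : ℝ) = (n:ℝ) - 2 := by
    have : (2:ℕ) ≤ n := by omega
    push_cast [this]; ring
  -- Svar ^ (n-2) = ((n-2) * Ifun)⁻¹
  have hSpow : Svar n ψ r ^ (n - 2) = (((n:ℝ)-2) * Ifun n ψ r)⁻¹ := by
    rw [Svar_eq, ← Real.rpow_natCast ((((n:ℝ)-2) * Ifun n ψ r) ^ (-(1/((n:ℝ)-2)))) (n-2),
      ← Real.rpow_mul (by positivity), hn2cast,
      show -(1/((n:ℝ)-2)) * ((n:ℝ)-2) = -1 by field_simp,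
      Real.rpow_neg_one]
  -- decompose Svar ^ (2*(n-1))
  have hSbig : Svar n ψ r ^ (2*(n-1)) = Svar n ψ r ^ 2 * ((((n:ℝ)-2) * Ifun n ψ r)⁻¹)^2 := by
    rw [show 2*(n-1) = 2 + (n-2)*2 by omega, pow_add, pow_mul, hSpow]
  -- log Svar
  have hlogS : Real.log (Svar n ψ r) = u r * (γ * r ^ (1+μ)) := by
    rw [hu]; field_simp
  have hlogSpow : Real.log (Svar n ψ r) ^ q = u r ^ q * γ ^ q * (r ^ μ) ^ 2 := by
    rw [hlogS, Real.mul_rpow hupos.le (by positivity), Real.mul_rpow hγ.le hrP.le,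
      ← Real.rpow_mul hr0.le, show (1+μ) * q = μ * 2 by rw [hq]; field_simp,
      Real.rpow_mul hr0.le, Real.rpow_two]
    ring
  -- psi power
  have hψbig : ψ r ^ (2*(n-1)) = (ψ r ^ (n-1)) ^ 2 := by
    rw [show 2*(n-1) = (n-1)*2 by ring, pow_mul]
  -- Ifun in terms of E
  have hIeq : Ifun n ψ r = E r / (((n:ℝ)-1) * C * r ^ μ * ψ r ^ (n-1)) := by
    rw [hEdef]; field_simp
  rw [hψbig, hSbig, hlogSpow, hIeq, hcst]
  have hune : u r ^ q ≠ 0 := ne_of_gt (Real.rpow_pos_of_pos hupos _)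
  have hγne : γ ^ q ≠ 0 := ne_of_gt (Real.rpow_pos_of_pos hγ _)
  field_simp

end HH

end Helpers

open Filter Set MeasureTheory in
/-- quasi/super-hyperbolic models, Section 7.3 of the paper. Let
`n ≥ 3`, `μ > -1`, `C > 0` and `ψ ∈ 𝒜` with `ψ'(r)/ψ(r) ∼ C r^μ` as `r → +∞`, and set
`κ = (C (1+μ)^μ)^{1/(1+μ)}`. Then the tail integral is finite, and the weight
`ρ(s) = ψ(r(s))^{2(n-1)}/s^{2(n-1)}` and the inverse change of variables satisfy
`ρ(s) ∼ ((n-2)/(n-1))^{2/(1+μ)}/(κ² s² (log s)^{2μ/(1+μ)})` and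
`r(s) ∼ c₁ (log s)^{1/(1+μ)}` with `c₁ = (((1+μ)/C)·((n-2)/(n-1)))^{1/(1+μ)}`. -/
theorem stmt_11
    (n : ℕ) (hn : 3 ≤ n) (μ C : ℝ) (hμ : -1 < μ) (hC : 0 < C)
    (ψ : ℝ → ℝ) (hψA : classA ψ)
    (hψratio : Filter.Tendsto (fun r => (deriv ψ r / ψ r) / (C * r ^ μ))
      Filter.atTop (nhds 1))
    (κ : ℝ) (hκ : κ = (C * (1 + μ) ^ μ) ^ (1 / (1 + μ))) :
    MeasureTheory.IntegrableOn (fun t => 1 / ψ t ^ (n - 1)) (Set.Ioi 1) ∧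
    ∃ rOf : ℝ → ℝ,
      (∀ r > (0 : ℝ), rOf (Svar n ψ r) = r) ∧
      (∀ s > (0 : ℝ), Svar n ψ (rOf s) = s) ∧
      Filter.Tendsto (fun s =>
          (ψ (rOf s) ^ (2 * (n - 1)) / s ^ (2 * (n - 1))) /
            ((((n : ℝ) - 2) / ((n : ℝ) - 1)) ^ (2 / (1 + μ)) /
              (κ ^ 2 * s ^ 2 * (Real.log s) ^ (2 * μ / (1 + μ)))))
        Filter.atTop (nhds 1) ∧
      Filter.Tendsto (fun s =>
          rOf s / ((((1 + μ) / C) * (((n : ℝ) - 2) / ((n : ℝ) - 1))) ^ (1 / (1 + μ))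
            * (Real.log s) ^ (1 / (1 + μ))))
        Filter.atTop (nhds 1) := by
  refine ⟨g_integrableOn hn hμ hC hψA hψratio 1 one_pos, rOfDef n ψ, ?_, ?_, ?_, ?_⟩
  · intro r hr
    exact rOf_left hn hμ hC hψA hψratio hr
  · intro s hs
    exact (rOf_spec hn hμ hC hψA hψratio hs).2
  · have h1 := (rho_asymp hn hμ hC hψA hψratio hκ).comp
      (rOf_tendsto_atTop hn hμ hC hψA hψratio)
    apply h1.congr'
    filter_upwards [Filter.eventually_gt_atTop (0:ℝ)] with s hs
    have h2 := (rOf_spec hn hμ hC hψA hψratio hs).2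
    simp only [Function.comp_apply]
    rw [h2]
  · have h1 := (r_asymp hn hμ hC hψA hψratio).comp
      (rOf_tendsto_atTop hn hμ hC hψA hψratio)
    apply h1.congr'
    filter_upwards [Filter.eventually_gt_atTop (0:ℝ)] with s hs
    have h2 := (rOf_spec hn hμ hC hψA hψratio hs).2
    simp only [Function.comp_apply]
    rw [h2]
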